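/- For each n ≥ 1, h_{n+1}(ν) ~ 2^n·n!/ν^n as ν → 0⁻; that is, lim_{ν→0⁻} ν^n·h_{n+1}(ν) = 2^n·n!. -/
import Mathlib


open Finset

/-- The functions `h_n(ν)` defined by `h_0 = h_1 = 1` and
`h_{n+1}(ν) = (2(ν+n)/ν) h_n(ν) - h_{n-1}(ν)` for `n ≥ 1`. -/
noncomputable def hfun : ℕ → ℝ → ℝ
  | 0, _ => 1
  | 1, _ => 1
  | n + 2, ν => (2 * (ν + (n + 1)) / ν) * hfun (n + 1) ν - hfun n ν

open Filter Topology

lemma hfun_aux : ∀ n : ℕ, Filter.Tendsto (fun ν : ℝ => ν ^ n * hfun (n + 1) ν)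
    (nhdsWithin 0 (Set.Iio 0)) (nhds ((2 : ℝ) ^ n * n.factorial))
  | 0 => by
      simpa [hfun] using (tendsto_const_nhds : Filter.Tendsto (fun _ : ℝ => (1:ℝ))
        (nhdsWithin 0 (Set.Iio 0)) (nhds 1))
  | 1 => by
      have hev : (fun ν : ℝ => ν + 2) =ᶠ[nhdsWithin (0:ℝ) (Set.Iio 0)]
          fun ν => ν ^ 1 * hfun 2 ν := by
        filter_upwards [self_mem_nhdsWithin] with ν hν
        have hν0 : ν ≠ 0 := ne_of_lt hν
        simp only [hfun]
        field_simp
        ring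
      have h2 : Filter.Tendsto (fun ν : ℝ => ν + 2) (nhdsWithin (0:ℝ) (Set.Iio 0))
          (nhds 2) := by
        have : Filter.Tendsto (fun ν : ℝ => ν + 2) (nhdsWithin (0:ℝ) (Set.Iio 0))
            (nhds (0 + 2)) :=
          (Filter.tendsto_id.mono_left nhdsWithin_le_nhds).add tendsto_const_nhds
        simpa using this
      simpa [Nat.factorial] using h2.congr' hev
  | (n+2) => by
      have ih1 := hfun_aux (n+1)
      have ih0 := hfun_aux n
      have t1 : Filter.Tendsto (fun ν : ℝ => 2 * (ν + ((n:ℝ) + 2)))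
          (nhdsWithin (0:ℝ) (Set.Iio 0)) (nhds (2 * ((n:ℝ) + 2))) := by
        have : Filter.Tendsto (fun ν : ℝ => 2 * (ν + ((n:ℝ) + 2)))
            (nhdsWithin (0:ℝ) (Set.Iio 0)) (nhds (2 * (0 + ((n:ℝ) + 2)))) :=
          tendsto_const_nhds.mul
            ((Filter.tendsto_id.mono_left nhdsWithin_le_nhds).add tendsto_const_nhds)
        simpa using this
      have t2 : Filter.Tendsto (fun ν : ℝ => ν ^ 2) (nhdsWithin (0:ℝ) (Set.Iio 0))
          (nhds 0) := by
        have := ((continuous_pow 2).tendsto (0:ℝ)).mono_left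
          (nhdsWithin_le_nhds (s := Set.Iio (0:ℝ)))
        simpa using this
      have key : Filter.Tendsto
          (fun ν : ℝ => 2 * (ν + ((n:ℝ) + 2)) * (ν ^ (n+1) * hfun (n+2) ν)
            - ν ^ 2 * (ν ^ n * hfun (n+1) ν))
          (nhdsWithin (0:ℝ) (Set.Iio 0))
          (nhds (2 * ((n:ℝ) + 2) * ((2:ℝ) ^ (n+1) * (n+1).factorial)
            - 0 * ((2:ℝ) ^ n * n.factorial))) := (t1.mul ih1).sub (t2.mul ih0)
      have hev : (fun ν : ℝ => 2 * (ν + ((n:ℝ) + 2)) * (ν ^ (n+1) * hfun (n+2) ν)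
            - ν ^ 2 * (ν ^ n * hfun (n+1) ν))
          =ᶠ[nhdsWithin (0:ℝ) (Set.Iio 0)]
          fun ν => ν ^ (n+2) * hfun (n+3) ν := by
        filter_upwards [self_mem_nhdsWithin] with ν hν
        have hν0 : ν ≠ 0 := ne_of_lt hν
        have : hfun (n+3) ν = (2 * (ν + ((n:ℝ)+1+1)) / ν) * hfun (n+2) ν - hfun (n+1) ν := by
          show hfun ((n+1)+2) ν = _
          simp [hfun]
        rw [this]
        field_simp
        ring
      have := key.congr' hev
      convert this using 2
      push_cast [Nat.factorial]
      ring

/-- `h_{n+1}(ν) ∼ 2^n n!/ν^n` as `ν → 0⁻`: `lim_{ν→0⁻} ν^n h_{n+1}(ν) = 2^n n!`. -/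
theorem hfun_asymptotic_at_zero (n : ℕ) (hn : 1 ≤ n) :
    Filter.Tendsto (fun ν : ℝ => ν ^ n * hfun (n + 1) ν)
      (nhdsWithin 0 (Set.Iio 0)) (nhds ((2 : ℝ) ^ n * n.factorial)) :=
  hfun_aux n
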